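/- arXiv:0907.4577 — 2 statements merged into one kernel-verified Lean document; each statement's English description precedes it below -/
import Mathlib

section
/- Let Y be a 10δ-quasi-convex subset of a geodesic, δ-hyperbolic metric space X. Then the cylinder cyl(Y) is strongly quasi-convex: for all x, x' ∈ cyl(Y) there exist p, p' ∈ cyl(Y) with d(p,x) ≤ 10δ and d(p',x') ≤ 10δ such that some concatenation of geodesic segments [x,p] ∪ [p,p'] ∪ [p',x'] is contained in cyl(Y). -/
/-- The Gromov product `(y|z)_x` in a metric space. -/
noncomputable def gromovProduct {X : Type*} [MetricSpace X] (x y z : X) : ℝ :=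
  (dist x y + dist x z - dist y z) / 2

/-- A metric space is `δ`-hyperbolic if the four point inequality holds. -/
def IsDeltaHyperbolic (X : Type*) [MetricSpace X] (δ : ℝ) : Prop :=
  ∀ x y z t : X,
    gromovProduct t x z ≥ min (gromovProduct t x y) (gromovProduct t y z) - δ

/-- `S` is a geodesic segment from `a` to `b`. -/
def IsGeodesicSegment {X : Type*} [MetricSpace X] (S : Set X) (a b : X) : Prop :=
  ∃ γ : ℝ → X, γ 0 = a ∧ γ (dist a b) = b ∧
    (∀ s ∈ Set.Icc (0 : ℝ) (dist a b), ∀ u ∈ Set.Icc (0 : ℝ) (dist a b),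
      dist (γ s) (γ u) = |s - u|) ∧
    S = γ '' Set.Icc (0 : ℝ) (dist a b)

/-- The `A`-neighbourhood `Y^{+A}` of a subset. -/
def nbhd {X : Type*} [MetricSpace X] (A : ℝ) (Y : Set X) : Set X :=
  {x | ∃ y ∈ Y, dist x y ≤ A}

/-- A subset `Y` is `α`-quasi-convex. -/
def IsQuasiConvex {X : Type*} [MetricSpace X] (α : ℝ) (Y : Set X) : Prop :=
  ∀ a ∈ Y, ∀ b ∈ Y, ∀ S : Set X, IsGeodesicSegment S a b → S ⊆ nbhd α Y

/-- The cylinder of `Y`: all points at distance at most `10δ` from some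
geodesic segment joining two points of `Y`. -/
def cyl {X : Type*} [MetricSpace X] (δ : ℝ) (Y : Set X) : Set X :=
  {x | ∃ a ∈ Y, ∃ b ∈ Y, ∃ S : Set X,
    IsGeodesicSegment S a b ∧ ∃ s ∈ S, dist x s ≤ 10 * δ}

/-- A subset `Z` of a geodesic `δ`-hyperbolic space is strongly quasi-convex. -/
def IsStronglyQuasiConvex {X : Type*} [MetricSpace X] (δ : ℝ) (Z : Set X) : Prop :=
  ∀ x ∈ Z, ∀ x' ∈ Z, ∃ p ∈ Z, ∃ p' ∈ Z,
    dist p x ≤ 10 * δ ∧ dist p' x' ≤ 10 * δ ∧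
    ∃ S₁ S₂ S₃ : Set X, IsGeodesicSegment S₁ x p ∧ IsGeodesicSegment S₂ p p' ∧
      IsGeodesicSegment S₃ p' x' ∧ S₁ ∪ S₂ ∪ S₃ ⊆ Z

/-! Take `p = s ∈ [a, b]` and `p' = s' ∈ [a', b']`, with `a, b, a', b' ∈ Y`, the points witnessing
`x, x' ∈ cyl Y`. The geodesics `[x, s]` and `[s', x']` lie in the cylinder trivially, so the point
is the middle segment `[s, s']`. Every `q ∈ [s, s']` has `(s|s')_q = 0`; the four point condition
along the chain `s, a, a', s'` makes one of `(a|b)_q`, `(a|a')_q`, `(a'|b')_q` at most `2δ`, and a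
point whose Gromov product over the endpoints of a geodesic is `r` lies within `r + 2δ` of it. -/

section Gromov

variable {X : Type*} [MetricSpace X]

lemma gromovProduct_comm (x y z : X) : gromovProduct x y z = gromovProduct x z y := by
  unfold gromovProduct
  rw [dist_comm y z]
  ring

lemma gromovProduct_nonneg (x y z : X) : 0 ≤ gromovProduct x y z := by
  unfold gromovProduct
  linarith [dist_triangle_left y z x]

lemma gromovProduct_le_dist (x y z : X) : gromovProduct x y z ≤ dist x z := by
  unfold gromovProduct
  linarith [dist_triangle_right x y z]

lemma IsDeltaHyperbolic.gromovProduct_le_or_le_or_le {δ ε : ℝ} (hhyp : IsDeltaHyperbolic X δ)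
    {q s a a' s' : X} (h : gromovProduct q s s' ≤ ε) :
    gromovProduct q s a ≤ ε + δ ∨ gromovProduct q a a' ≤ ε + 2 * δ ∨
      gromovProduct q a' s' ≤ ε + 2 * δ := by
  have h₁ := hhyp s a s' q
  have h₂ := hhyp a a' s' q
  rcases min_le_iff.mp (show min (gromovProduct q s a) (gromovProduct q a s') ≤ ε + δ by
    linarith) with h₃ | h₃
  · exact Or.inl h₃
  · exact Or.inr (min_le_iff.mp (by linarith))

end Gromov

namespace IsGeodesicSegment

variable {X : Type*} [MetricSpace X] {S : Set X} {a b : X}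

lemma exists_dist_eq (hS : IsGeodesicSegment S a b) {t : ℝ} (ht₀ : 0 ≤ t)
    (ht : t ≤ dist a b) : ∃ m ∈ S, dist a m = t ∧ dist m b = dist a b - t := by
  obtain ⟨γ, hγ₀, hγ₁, hγ, rfl⟩ := hS
  have hL : (0 : ℝ) ≤ dist a b := dist_nonneg
  refine ⟨γ t, ⟨t, ⟨ht₀, ht⟩, rfl⟩, ?_, ?_⟩
  · rw [← hγ₀, hγ 0 ⟨le_rfl, hL⟩ t ⟨ht₀, ht⟩, abs_sub_comm, abs_of_nonneg (by linarith)]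
    ring
  · conv_lhs => rw [← hγ₁]
    rw [hγ t ⟨ht₀, ht⟩ _ ⟨hL, le_rfl⟩, abs_sub_comm, abs_of_nonneg (by linarith)]

lemma dist_add_dist (hS : IsGeodesicSegment S a b) {s : X} (hs : s ∈ S) :
    dist a s + dist s b = dist a b := by
  obtain ⟨γ, hγ₀, hγ₁, hγ, rfl⟩ := hS
  obtain ⟨t, ht, rfl⟩ := hs
  have hL : (0 : ℝ) ≤ dist a b := dist_nonneg
  conv_lhs => rw [← hγ₀, ← hγ₁]
  rw [hγ 0 ⟨le_rfl, hL⟩ t ht, hγ t ht _ ⟨hL, le_rfl⟩,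
    abs_of_nonpos (by linarith [ht.1]), abs_of_nonpos (by linarith [ht.2])]
  ring

lemma dist_le_left (hS : IsGeodesicSegment S a b) {s : X} (hs : s ∈ S) :
    dist s b ≤ dist a b := by
  linarith [hS.dist_add_dist hs, dist_nonneg (x := a) (y := s)]

lemma dist_le_right (hS : IsGeodesicSegment S a b) {s : X} (hs : s ∈ S) :
    dist a s ≤ dist a b := by
  linarith [hS.dist_add_dist hs, dist_nonneg (x := s) (y := b)]

lemma gromovProduct_eq_zero (hS : IsGeodesicSegment S a b) {q : X} (hq : q ∈ S) :
    gromovProduct q a b = 0 := by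
  unfold gromovProduct
  rw [dist_comm q a, hS.dist_add_dist hq]
  ring

lemma gromovProduct_le_of_mem (hS : IsGeodesicSegment S a b) {s : X} (hs : s ∈ S) (q : X) :
    gromovProduct q a b ≤ gromovProduct q a s := by
  unfold gromovProduct
  linarith [hS.dist_add_dist hs, dist_triangle q s b]

lemma exists_dist_le_gromovProduct_add {δ : ℝ} (hhyp : IsDeltaHyperbolic X δ)
    (hS : IsGeodesicSegment S a b) (q : X) :
    ∃ m ∈ S, dist q m ≤ gromovProduct q a b + 2 * δ := by
  -- `m` is the point of `[a, b]` at distance `(q|b)_a` from `a`, where `(a|m)_q = (m|b)_q`.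
  obtain ⟨m, hm, ham, hmb⟩ := hS.exists_dist_eq (gromovProduct_nonneg a q b)
    (gromovProduct_le_dist a q b)
  refine ⟨m, hm, ?_⟩
  have h := hhyp a m b q
  have hsym : gromovProduct q a m = gromovProduct q m b := by
    unfold gromovProduct at ham hmb ⊢
    rw [ham, hmb, dist_comm a q]
    ring
  rw [hsym, min_self] at h
  unfold gromovProduct at h ham hmb ⊢
  rw [hmb, dist_comm a q] at h
  linarith

end IsGeodesicSegment

section Cylinder

variable {X : Type*} [MetricSpace X] {δ : ℝ} {Y : Set X} {S : Set X} {a b : X}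

lemma subset_cyl_of_dist_le (ha : a ∈ Y) (hb : b ∈ Y) (hS : IsGeodesicSegment S a b)
    {s : X} (hs : s ∈ S) {T : Set X} (hT : ∀ q ∈ T, dist q s ≤ 10 * δ) : T ⊆ cyl δ Y :=
  fun q hq => ⟨a, ha, b, hb, S, hS, s, hs, hT q hq⟩

lemma mem_cyl_of_gromovProduct_le (hhyp : IsDeltaHyperbolic X δ) (ha : a ∈ Y) (hb : b ∈ Y)
    (hS : IsGeodesicSegment S a b) {q : X} (hq : gromovProduct q a b ≤ 8 * δ) :
    q ∈ cyl δ Y := by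
  obtain ⟨m, hm, hqm⟩ := hS.exists_dist_le_gromovProduct_add hhyp q
  exact ⟨a, ha, b, hb, S, hS, m, hm, by linarith⟩

lemma IsDeltaHyperbolic.segment_subset_cyl (hhyp : IsDeltaHyperbolic X δ)
    (hgeo : ∀ a b : X, ∃ S, IsGeodesicSegment S a b) (hδ : 0 ≤ δ)
    (ha : a ∈ Y) (hb : b ∈ Y) (hS : IsGeodesicSegment S a b) {s : X} (hs : s ∈ S)
    {a' b' : X} (ha' : a' ∈ Y) (hb' : b' ∈ Y) {S' : Set X} (hS' : IsGeodesicSegment S' a' b')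
    {s' : X} (hs' : s' ∈ S') {T : Set X} (hT : IsGeodesicSegment T s s') : T ⊆ cyl δ Y := by
  intro q hq
  rcases hhyp.gromovProduct_le_or_le_or_le (a := a) (a' := a')
    (hT.gromovProduct_eq_zero hq).le with h | h | h
  · refine mem_cyl_of_gromovProduct_le hhyp ha hb hS ?_
    linarith [hS.gromovProduct_le_of_mem hs q, gromovProduct_comm q a s]
  · obtain ⟨U, hU⟩ := hgeo a a'
    exact mem_cyl_of_gromovProduct_le hhyp ha ha' hU (by linarith)
  · refine mem_cyl_of_gromovProduct_le hhyp ha' hb' hS' ?_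
    linarith [hS'.gromovProduct_le_of_mem hs' q]

end Cylinder

theorem cyl_stronglyQuasiConvex_general
    {X : Type*} [MetricSpace X] (δ : ℝ)
    (hgeo : ∀ a b : X, ∃ S, IsGeodesicSegment S a b)
    (hhyp : IsDeltaHyperbolic X δ)
    (Y : Set X) :
    IsStronglyQuasiConvex δ (cyl δ Y) := by
  rintro x ⟨a, ha, b, hb, S, hS, s, hs, hxs⟩ x' ⟨a', ha', b', hb', S', hS', s', hs', hxs'⟩
  have hδ : 0 ≤ δ := by linarith [dist_nonneg (x := x) (y := s)]
  obtain ⟨S₁, hS₁⟩ := hgeo x s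
  obtain ⟨S₂, hS₂⟩ := hgeo s s'
  obtain ⟨S₃, hS₃⟩ := hgeo s' x'
  refine ⟨s, ⟨a, ha, b, hb, S, hS, s, hs, by simpa using hδ⟩,
    s', ⟨a', ha', b', hb', S', hS', s', hs', by simpa using hδ⟩,
    by rwa [dist_comm], by rwa [dist_comm], S₁, S₂, S₃, hS₁, hS₂, hS₃,
    Set.union_subset (Set.union_subset ?_ ?_) ?_⟩
  · exact subset_cyl_of_dist_le ha hb hS hs fun q hq => (hS₁.dist_le_left hq).trans hxs
  · exact hhyp.segment_subset_cyl hgeo hδ ha hb hS hs ha' hb' hS' hs' hS₂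
  · refine subset_cyl_of_dist_le ha' hb' hS' hs' fun q hq => ?_
    rw [dist_comm]
    exact (hS₃.dist_le_right hq).trans (by rwa [dist_comm])

/-- the cylinder of a `10δ`-quasi-convex subset `Y` of a geodesic
`δ`-hyperbolic space is strongly quasi-convex. -/
theorem cyl_stronglyQuasiConvex
    {X : Type*} [MetricSpace X] (δ : ℝ) (hδ : 0 ≤ δ)
    (hgeo : ∀ a b : X, ∃ S, IsGeodesicSegment S a b)
    (hhyp : IsDeltaHyperbolic X δ)
    (Y : Set X) (hY : IsQuasiConvex (10 * δ) Y) :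
    IsStronglyQuasiConvex δ (cyl δ Y) :=
  cyl_stronglyQuasiConvex_general δ hgeo hhyp Y
end

section
/- Fix r₀ > 0 and define μ : [0,∞) → ℝ by μ(t) = arccosh( cosh²(r₀) − sinh²(r₀)·cos( min{π, t/sinh(r₀)} ) ). Then for all t ≥ 0, (2r₀/(π·sinh(r₀)))·min{π·sinh(r₀), t} ≤ μ(t) ≤ t. -/
/-!
By the half-angle formula, `cosh² r₀ − sinh² r₀ · cos θ = 1 + 2 (sinh r₀ · sin (θ/2))²`, and
`arcosh (1 + 2y²) = 2 arsinh y`, so `μ(t) = 2 arsinh (sinh r₀ · sin (θ/2))` with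
`θ = min {π, t / sinh r₀}`. For the upper bound use `sin (θ/2) ≤ θ/2` and `x ≤ sinh x`.
For the lower bound use Jordan's inequality `θ/π ≤ sin (θ/2)` and the convexity of `sinh` on
`[0, ∞)`, which gives `sinh (u r₀) ≤ u sinh r₀` for `u = θ/π ∈ [0, 1]`.
-/

/-- The inverse hyperbolic cosine, defined (for `x ≥ 1`) by
`arcosh x = log (x + sqrt (x² − 1))`. -/
noncomputable def arcosh (x : ℝ) : ℝ :=
  Real.log (x + Real.sqrt (x ^ 2 - 1))

/-- The comparison function `μ` for the hyperbolic cone of radius `r₀`: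
`μ(t) = arcosh( cosh²r₀ − sinh²r₀ · cos(min{π, t/sinh r₀}) )`. -/
noncomputable def mucone (r₀ t : ℝ) : ℝ :=
  arcosh (Real.cosh r₀ ^ 2 -
    Real.sinh r₀ ^ 2 * Real.cos (min Real.pi (t / Real.sinh r₀)))

open Real

lemma arcosh_eq_real_arcosh : _root_.arcosh = Real.arcosh := rfl

lemma arcosh_one_add_two_mul_sq (y : ℝ) : _root_.arcosh (1 + 2 * y ^ 2) = 2 * arsinh |y| := by
  have hcosh : cosh (2 * arsinh |y|) = 1 + 2 * y ^ 2 := by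
    rw [cosh_two_mul, cosh_sq', sinh_arsinh, sq_abs]; ring
  rw [arcosh_eq_real_arcosh, ← hcosh]
  exact Real.arcosh_cosh (mul_nonneg zero_le_two (arsinh_nonneg_iff.2 (abs_nonneg y)))

lemma cosh_sq_sub_sinh_sq_mul_cos (r θ : ℝ) :
    cosh r ^ 2 - sinh r ^ 2 * cos θ = 1 + 2 * (sinh r * sin (θ / 2)) ^ 2 := by
  have hcos : cos θ = 1 - 2 * sin (θ / 2) ^ 2 := by
    rw [← cos_two_mul_eq_one_sub, mul_div_cancel₀ θ two_ne_zero]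
  rw [hcos, cosh_sq]; ring

lemma mucone_eq_two_mul_arsinh {r t : ℝ} (hr : 0 ≤ r) (ht : 0 ≤ t) :
    mucone r t = 2 * arsinh (sinh r * sin (min π (t / sinh r) / 2)) := by
  have hs : 0 ≤ sinh r := sinh_nonneg_iff.2 hr
  have hθ₀ : 0 ≤ min π (t / sinh r) := le_min pi_pos.le (div_nonneg ht hs)
  have hθπ : min π (t / sinh r) ≤ π := min_le_left _ _
  rw [mucone, cosh_sq_sub_sinh_sq_mul_cos, arcosh_one_add_two_mul_sq, abs_of_nonneg]
  exact mul_nonneg hs (sin_nonneg_of_nonneg_of_le_pi (by linarith) (by linarith))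

lemma convexOn_sinh : ConvexOn ℝ (Set.Ici 0) sinh := by
  apply convexOn_of_deriv2_nonneg (convex_Ici 0) continuous_sinh.continuousOn
    differentiable_sinh.differentiableOn
  · rw [Real.deriv_sinh]; exact differentiable_cosh.differentiableOn
  · intro x hx
    rw [interior_Ici] at hx
    simp only [Function.iterate_succ, Function.iterate_zero, Function.comp_apply, id,
      Real.deriv_sinh, Real.deriv_cosh]
    exact sinh_nonneg_iff.2 (le_of_lt hx)

lemma sinh_mul_le_mul_sinh {u a : ℝ} (hu₀ : 0 ≤ u) (hu₁ : u ≤ 1) (ha : 0 ≤ a) :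
    sinh (u * a) ≤ u * sinh a := by
  simpa using convexOn_sinh.2 (Set.mem_Ici.2 ha) Set.self_mem_Ici hu₀ (sub_nonneg.2 hu₁) (by ring)

lemma mul_div_pi_le_arsinh_sinh_mul_sin_half {r θ : ℝ} (hr : 0 ≤ r) (hθ₀ : 0 ≤ θ) (hθπ : θ ≤ π) :
    r * θ / π ≤ arsinh (sinh r * sin (θ / 2)) := by
  have hjordan : θ / π ≤ sin (θ / 2) := by
    calc θ / π = 2 / π * (θ / 2) := by ring
      _ ≤ sin (θ / 2) := mul_le_sin (by linarith) (by linarith)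
  rw [← arsinh_sinh (r * θ / π), arsinh_le_arsinh]
  calc sinh (r * θ / π) = sinh (θ / π * r) := by ring_nf
    _ ≤ θ / π * sinh r :=
      sinh_mul_le_mul_sinh (by positivity) (div_le_one_of_le₀ hθπ pi_pos.le) hr
    _ ≤ sinh r * sin (θ / 2) := by
      rw [mul_comm]; exact mul_le_mul_of_nonneg_left hjordan (sinh_nonneg_iff.2 hr)

lemma arsinh_mul_sin_half_le {s θ : ℝ} (hs : 0 ≤ s) (hθ : 0 ≤ θ) :
    arsinh (s * sin (θ / 2)) ≤ s * θ / 2 := by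
  rw [← arsinh_sinh (s * θ / 2), arsinh_le_arsinh]
  calc s * sin (θ / 2) ≤ s * (θ / 2) := mul_le_mul_of_nonneg_left (sin_le (by linarith)) hs
    _ = s * θ / 2 := by ring
    _ ≤ sinh (s * θ / 2) := self_le_sinh_iff.2 (by positivity)

/-- the two-sided bound
`(2r₀/(π sinh r₀)) min{π sinh r₀, t} ≤ μ(t) ≤ t` for `t ≥ 0`. -/
theorem mucone_bounds (r₀ : ℝ) (hr₀ : 0 < r₀) :
    ∀ t : ℝ, 0 ≤ t →
      (2 * r₀ / (Real.pi * Real.sinh r₀)) * min (Real.pi * Real.sinh r₀) t ≤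
          mucone r₀ t ∧
        mucone r₀ t ≤ t := by
  intro t ht
  have hs : 0 < sinh r₀ := sinh_pos_iff.2 hr₀
  set θ := min π (t / sinh r₀)
  have hθ₀ : 0 ≤ θ := le_min pi_pos.le (div_nonneg ht hs.le)
  have hmin : min (π * sinh r₀) t = sinh r₀ * θ := by
    rw [mul_min_of_nonneg _ _ hs.le, mul_div_cancel₀ _ hs.ne', mul_comm]
  rw [mucone_eq_two_mul_arsinh hr₀.le ht, hmin]
  constructor
  · calc 2 * r₀ / (π * sinh r₀) * (sinh r₀ * θ) = 2 * (r₀ * θ / π) := by field_simp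
      _ ≤ _ := by
        gcongr; exact mul_div_pi_le_arsinh_sinh_mul_sin_half hr₀.le hθ₀ (min_le_left _ _)
  · calc 2 * arsinh (sinh r₀ * sin (θ / 2)) ≤ 2 * (sinh r₀ * θ / 2) := by
          gcongr; exact arsinh_mul_sin_half_le hs.le hθ₀
      _ = sinh r₀ * θ := by ring
      _ ≤ t := (le_div_iff₀' hs).1 (min_le_right _ _)
end
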